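/- Let L be the Laplacian of a connected weighted graph on n nodes, write L̄ = L + (1/n)J and L^† = L̄⁻¹ − (1/n)J. Then P = (1/2) L^† is the controllability Gramian of the disagreement form of the consensus network, i.e., it solves the Lyapunov equation L̄ P + P L̄ = I − (1/n)J. Equivalently, (L + (1/n)J) L^† + L^† (L + (1/n)J) = 2(I − (1/n)J). -/

import Mathlib

/-! Since `L 𝟙 = 0` and `L` is symmetric, `L J = J L = 0`; with `J² = n J` this gives
`M J = J M = J` for `M = L + (1/n) J`, and then
`M (M⁻¹ - (1/n) J) + (M⁻¹ - (1/n) J) M = 2 (I - (1/n) J)` is pure algebra.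
`M` is invertible: `M x = 0` forces `J x = J M x = 0`, hence `L x = 0`, so `x` is constant,
and a constant vector with `J x = 0` has zero sum, hence vanishes. -/

open Filter Finset Matrix

/-- `L` is the Laplacian matrix of a connected weighted graph: symmetric positive semidefinite,
`L 𝟙 = 0`, and the kernel of `L` is exactly the span of the all-ones vector. -/
def IsConnLaplacian {n : ℕ} (L : Matrix (Fin n) (Fin n) ℝ) : Prop :=
  L.PosSemidef ∧ (L *ᵥ (fun _ => (1 : ℝ)) = 0) ∧
    ∀ v : Fin n → ℝ, L *ᵥ v = 0 → ∃ c : ℝ, v = fun _ => c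

/-- The all-ones `n × n` matrix `J`. -/
def Jmat (n : ℕ) : Matrix (Fin n) (Fin n) ℝ := Matrix.of fun _ _ => (1 : ℝ)

/-- Moore–Penrose pseudoinverse of a connected-graph Laplacian:
`L^† = (L + (1/n) J)⁻¹ − (1/n) J`. -/
noncomputable def lapPinv {n : ℕ} (L : Matrix (Fin n) (Fin n) ℝ) : Matrix (Fin n) (Fin n) ℝ :=
  (L + (1 / (n : ℝ)) • Jmat n)⁻¹ - (1 / (n : ℝ)) • Jmat n

theorem Matrix.mul_inv_sub_add_inv_sub_mul {ι R : Type*} [Fintype ι] [DecidableEq ι] [CommRing R]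
    {M P : Matrix ι ι R} (hM : IsUnit M) (hMP : M * P = P) (hPM : P * M = P) :
    M * (M⁻¹ - P) + (M⁻¹ - P) * M = (2 : R) • (1 - P) := by
  rw [isUnit_iff_isUnit_det] at hM
  rw [Matrix.mul_sub, Matrix.sub_mul, mul_nonsing_inv M hM, nonsing_inv_mul M hM, hMP, hPM,
    two_smul]

lemma Jmat_eq_vecMulVec (n : ℕ) : Jmat n = vecMulVec (fun _ => 1) (fun _ => 1) := by
  ext; simp [Jmat, vecMulVec]

lemma Jmat_mul_Jmat (n : ℕ) : Jmat n * Jmat n = (n : ℝ) • Jmat n := by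
  rw [Jmat_eq_vecMulVec, vecMulVec_mul_vecMulVec, ← vecMulVec_smul]
  simp [dotProduct]

lemma Jmat_mulVec (n : ℕ) (x : Fin n → ℝ) : Jmat n *ᵥ x = fun _ => ∑ i, x i := by
  ext; simp [Jmat, mulVec, dotProduct]

namespace IsConnLaplacian

variable {n : ℕ} {L : Matrix (Fin n) (Fin n) ℝ}

lemma mul_Jmat (hL : IsConnLaplacian L) : L * Jmat n = 0 := by
  rw [Jmat_eq_vecMulVec, mul_vecMulVec, hL.2.1, zero_vecMulVec]

lemma Jmat_mul (hL : IsConnLaplacian L) : Jmat n * L = 0 := by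
  rw [Jmat_eq_vecMulVec, vecMulVec_mul, ← (isHermitian_iff_isSymm.mp hL.1.isHermitian).eq,
    vecMul_transpose, hL.2.1, vecMulVec_zero]

lemma add_smul_Jmat_mul_Jmat (hL : IsConnLaplacian L) (hn : n ≠ 0) :
    (L + (1 / (n : ℝ)) • Jmat n) * Jmat n = Jmat n := by
  have : (n : ℝ) ≠ 0 := Nat.cast_ne_zero.mpr hn
  rw [Matrix.add_mul, hL.mul_Jmat, Matrix.smul_mul, Jmat_mul_Jmat, smul_smul,
    one_div_mul_cancel this, zero_add, one_smul]

lemma Jmat_mul_add_smul_Jmat (hL : IsConnLaplacian L) (hn : n ≠ 0) :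
    Jmat n * (L + (1 / (n : ℝ)) • Jmat n) = Jmat n := by
  have : (n : ℝ) ≠ 0 := Nat.cast_ne_zero.mpr hn
  rw [Matrix.mul_add, hL.Jmat_mul, Matrix.mul_smul, Jmat_mul_Jmat, smul_smul,
    one_div_mul_cancel this, zero_add, one_smul]

lemma isUnit_add_smul_Jmat (hL : IsConnLaplacian L) (hn : n ≠ 0) :
    IsUnit (L + (1 / (n : ℝ)) • Jmat n) := by
  rw [← mulVec_injective_iff_isUnit, ← coe_mulVecLin, ← LinearMap.ker_eq_bot,
    ker_mulVecLin_eq_bot_iff]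
  intro x hx
  have hJx : Jmat n *ᵥ x = 0 := by
    rw [← hL.Jmat_mul_add_smul_Jmat hn, ← mulVec_mulVec, hx, mulVec_zero]
  have hLx : L *ᵥ x = 0 := by
    rwa [add_mulVec, smul_mulVec, hJx, smul_zero, add_zero] at hx
  obtain ⟨a, rfl⟩ := hL.2.2 x hLx
  have hsum := congrFun hJx ⟨0, Nat.pos_of_ne_zero hn⟩
  simp only [Jmat_mulVec, sum_const, card_univ, Fintype.card_fin, nsmul_eq_mul, Pi.zero_apply,
    mul_eq_zero, Nat.cast_eq_zero, hn, false_or] at hsum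
  exact funext fun _ => hsum

end IsConnLaplacian

/-- `P = (1/2) L^†` solves the Lyapunov equation of the disagreement network:
`(L + (1/n)J) L^† + L^† (L + (1/n)J) = 2(I − (1/n)J)`. -/
theorem lapPinv_solves_lyapunov {n : ℕ} (hn : 0 < n)
    (L : Matrix (Fin n) (Fin n) ℝ) (hL : IsConnLaplacian L) :
    (L + (1 / (n : ℝ)) • Jmat n) * lapPinv L + lapPinv L * (L + (1 / (n : ℝ)) • Jmat n) =
      (2 : ℝ) • ((1 : Matrix (Fin n) (Fin n) ℝ) - (1 / (n : ℝ)) • Jmat n) := by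
  have hMJ := hL.add_smul_Jmat_mul_Jmat hn.ne'
  have hJM := hL.Jmat_mul_add_smul_Jmat hn.ne'
  exact mul_inv_sub_add_inv_sub_mul (hL.isUnit_add_smul_Jmat hn.ne')
    (by rw [Matrix.mul_smul, hMJ]) (by rw [Matrix.smul_mul, hJM])
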